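/- Let v = (aX+bY)T² + (dX+eY)U² + (gX+hY)W² + (jX+kY)TU + Z(oT+rU)W ∈ V₆. If any one of the following eleven conditions holds, then v is not stable for the action of G₆ = SL₂(L)×SL₂(L)×Lˣ×Lˣ: (1) b=e=k=0; (2) d=e=k=0; (3) e=h=k=0; (4) e=k=r=0; (5) g=h=0; (6) o=r=0; (7) d=e=r=0; (8) e=h=r=0; (9) b=h=k=0; (10) d=j=r=0; (11) a=b=j=h=0. -/

import Mathlib

/- Zariski-closedness of a subset of affine n-space over L: it is the common zero locus
of a set of polynomial functions (with respect to the fixed coordinates). -/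
def IsZariskiClosed {n : ℕ} {L : Type*} [CommRing L] (s : Set (Fin n → L)) : Prop :=
  ∃ P : Set (MvPolynomial (Fin n) L), s = {x | ∀ p ∈ P, MvPolynomial.eval x p = 0}

/- Variables of the ambient polynomial ring of V₆: X, Y, Z are inl (inl 0), inl (inl 1),
inl (inr ()) and T, U, W are inr (inl 0), inr (inl 1), inr (inr ()). -/
abbrev Vars6 : Type := (Fin 2 ⊕ Unit) ⊕ (Fin 2 ⊕ Unit)

/- The element of V₆ with coordinates c = (a,b,d,e,g,h,j,k,o,r), recorded as the triple
of its three components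
((aX+bY)T² + (dX+eY)U² + (jX+kY)TU, (gX+hY)W², Z(oT+rU)W),
on which the torus part of G₆ acts by separate scalars. -/
noncomputable def toTriple6 {L : Type*} [CommRing L] (c : Fin 10 → L) :
    MvPolynomial Vars6 L × MvPolynomial Vars6 L × MvPolynomial Vars6 L :=
  ((MvPolynomial.C (c 0) * MvPolynomial.X (Sum.inl (Sum.inl 0)) + MvPolynomial.C (c 1) * MvPolynomial.X (Sum.inl (Sum.inl 1))) * MvPolynomial.X (Sum.inr (Sum.inl 0)) ^ 2
    + (MvPolynomial.C (c 2) * MvPolynomial.X (Sum.inl (Sum.inl 0)) + MvPolynomial.C (c 3) * MvPolynomial.X (Sum.inl (Sum.inl 1))) * MvPolynomial.X (Sum.inr (Sum.inl 1)) ^ 2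
    + (MvPolynomial.C (c 6) * MvPolynomial.X (Sum.inl (Sum.inl 0)) + MvPolynomial.C (c 7) * MvPolynomial.X (Sum.inl (Sum.inl 1))) * (MvPolynomial.X (Sum.inr (Sum.inl 0)) * MvPolynomial.X (Sum.inr (Sum.inl 1))),
   (MvPolynomial.C (c 4) * MvPolynomial.X (Sum.inl (Sum.inl 0)) + MvPolynomial.C (c 5) * MvPolynomial.X (Sum.inl (Sum.inl 1))) * MvPolynomial.X (Sum.inr (Sum.inr ())) ^ 2,
   MvPolynomial.X (Sum.inl (Sum.inr ())) * (MvPolynomial.C (c 8) * MvPolynomial.X (Sum.inr (Sum.inl 0)) + MvPolynomial.C (c 9) * MvPolynomial.X (Sum.inr (Sum.inl 1))) * MvPolynomial.X (Sum.inr (Sum.inr ())))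

/- Linear substitution in (X,Y) by M ∈ SL₂(L) fixing Z, and in (T,U) by N ∈ SL₂(L)
fixing W. -/
noncomputable def sub6 {L : Type*} [CommRing L]
    (M N : Matrix.SpecialLinearGroup (Fin 2) L)
    (v : MvPolynomial Vars6 L) : MvPolynomial Vars6 L :=
  MvPolynomial.aeval
    (Sum.elim
      (Sum.elim (fun i => ∑ j : Fin 2, MvPolynomial.C (M.1 i j) * MvPolynomial.X (Sum.inl (Sum.inl j)))
                (fun _ => MvPolynomial.X (Sum.inl (Sum.inr ()))))
      (Sum.elim (fun i => ∑ j : Fin 2, MvPolynomial.C (N.1 i j) * MvPolynomial.X (Sum.inr (Sum.inl j)))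
                (fun _ => MvPolynomial.X (Sum.inr (Sum.inr ()))))) v

/- The action of G₆ = SL₂(L) × SL₂(L) × Lˣ × Lˣ on V₆ (written on the triple of
components): (M, N, s, t) substitutes (X,Y) by M, (T,U) by N, and multiplies the first
component by s⁻¹, the second by s³t², and the third by t⁻¹. -/
noncomputable def act6 {L : Type*} [Field L]
    (g : Matrix.SpecialLinearGroup (Fin 2) L × Matrix.SpecialLinearGroup (Fin 2) L × Lˣ × Lˣ)
    (v : MvPolynomial Vars6 L × MvPolynomial Vars6 L × MvPolynomial Vars6 L) :
    MvPolynomial Vars6 L × MvPolynomial Vars6 L × MvPolynomial Vars6 L :=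
  (((g.2.2.1 : L))⁻¹ • sub6 g.1 g.2.1 v.1,
   ((g.2.2.1 : L) ^ 3 * (g.2.2.2 : L) ^ 2) • sub6 g.1 g.2.1 v.2.1,
   ((g.2.2.2 : L))⁻¹ • sub6 g.1 g.2.1 v.2.2)

/- Stability: the orbit of v (in the coordinate space of V₆ with respect to its monomial
basis) is Zariski-closed and the stabilizer of v in G₆ is finite. -/
def Stable6 {L : Type*} [Field L] (c : Fin 10 → L) : Prop :=
  IsZariskiClosed {c' : Fin 10 → L |
    ∃ g : Matrix.SpecialLinearGroup (Fin 2) L × Matrix.SpecialLinearGroup (Fin 2) L × Lˣ × Lˣ,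
      toTriple6 c' = act6 g (toTriple6 c)} ∧
  {g : Matrix.SpecialLinearGroup (Fin 2) L × Matrix.SpecialLinearGroup (Fin 2) L × Lˣ × Lˣ |
      act6 g (toTriple6 c) = toTriple6 c}.Finite

noncomputable def Dg {L : Type*} [Field L] (p : Lˣ) : Matrix.SpecialLinearGroup (Fin 2) L :=
  ⟨!![(p : L), 0; 0, ((p : L))⁻¹], by
    simp [Matrix.det_fin_two_of, mul_inv_cancel₀ (Units.ne_zero p)]⟩

noncomputable def wt6 {L : Type*} [Field L] (p q s u : Lˣ) : Fin 10 → Lˣ := fun i =>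
  match i with
  | ⟨0, _⟩ => p * q ^ 2 * s⁻¹
  | ⟨1, _⟩ => p⁻¹ * q ^ 2 * s⁻¹
  | ⟨2, _⟩ => p * (q⁻¹) ^ 2 * s⁻¹
  | ⟨3, _⟩ => p⁻¹ * (q⁻¹) ^ 2 * s⁻¹
  | ⟨4, _⟩ => p * s ^ 3 * u ^ 2
  | ⟨5, _⟩ => p⁻¹ * s ^ 3 * u ^ 2
  | ⟨6, _⟩ => p * s⁻¹
  | ⟨7, _⟩ => p⁻¹ * s⁻¹
  | ⟨8, _⟩ => q * u⁻¹
  | ⟨9, _⟩ => q⁻¹ * u⁻¹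

@[simp] lemma wt6_0 {L : Type*} [Field L] (p q s u : Lˣ) : wt6 p q s u 0 = p * q ^ 2 * s⁻¹ := rfl
@[simp] lemma wt6_1 {L : Type*} [Field L] (p q s u : Lˣ) : wt6 p q s u 1 = p⁻¹ * q ^ 2 * s⁻¹ := rfl
@[simp] lemma wt6_2 {L : Type*} [Field L] (p q s u : Lˣ) : wt6 p q s u 2 = p * (q⁻¹) ^ 2 * s⁻¹ := rfl
@[simp] lemma wt6_3 {L : Type*} [Field L] (p q s u : Lˣ) : wt6 p q s u 3 = p⁻¹ * (q⁻¹) ^ 2 * s⁻¹ := rfl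
@[simp] lemma wt6_4 {L : Type*} [Field L] (p q s u : Lˣ) : wt6 p q s u 4 = p * s ^ 3 * u ^ 2 := rfl
@[simp] lemma wt6_5 {L : Type*} [Field L] (p q s u : Lˣ) : wt6 p q s u 5 = p⁻¹ * s ^ 3 * u ^ 2 := rfl
@[simp] lemma wt6_6 {L : Type*} [Field L] (p q s u : Lˣ) : wt6 p q s u 6 = p * s⁻¹ := rfl
@[simp] lemma wt6_7 {L : Type*} [Field L] (p q s u : Lˣ) : wt6 p q s u 7 = p⁻¹ * s⁻¹ := rfl
@[simp] lemma wt6_8 {L : Type*} [Field L] (p q s u : Lˣ) : wt6 p q s u 8 = q * u⁻¹ := rfl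
@[simp] lemma wt6_9 {L : Type*} [Field L] (p q s u : Lˣ) : wt6 p q s u 9 = q⁻¹ * u⁻¹ := rfl

set_option maxHeartbeats 2000000 in
lemma act6_scale {L : Type*} [Field L] (p q s u : Lˣ) (x : Fin 10 → L) :
    act6 (Dg p, Dg q, s, u) (toTriple6 x)
      = toTriple6 (fun i => (wt6 p q s u i : L) * x i) := by
  have hq : (MvPolynomial.C ((q:L)) : MvPolynomial Vars6 L) * MvPolynomial.C (((q:L))⁻¹) = 1 := by
    rw [← map_mul, mul_inv_cancel₀ (Units.ne_zero q), map_one]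
  refine Prod.ext ?_ (Prod.ext ?_ ?_)
  · simp only [act6, sub6, Dg, toTriple6, wt6_0, wt6_1, wt6_2, wt6_3, wt6_4, wt6_5, wt6_6,
      wt6_7, wt6_8, wt6_9, Fin.sum_univ_two, map_add, map_mul, map_pow,
      MvPolynomial.smul_eq_C_mul, Units.val_mul, Units.val_pow_eq_pow_val,
      Units.val_inv_eq_inv_val, MvPolynomial.aeval_X, MvPolynomial.aeval_C, Sum.elim_inl,
      Sum.elim_inr, Matrix.of_apply, Matrix.cons_val', Matrix.cons_val_zero, Matrix.cons_val_one,
      Matrix.head_cons, Matrix.head_fin_const, MvPolynomial.algebraMap_eq,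
      Matrix.empty_val', Matrix.cons_val_fin_one, map_zero, zero_mul, mul_zero, add_zero, zero_add]
    linear_combination (MvPolynomial.C ((s:L))⁻¹ * MvPolynomial.C ((p:L)) *
        MvPolynomial.X (Sum.inl (Sum.inl 0)) * MvPolynomial.X (Sum.inr (Sum.inl 0)) *
        MvPolynomial.X (Sum.inr (Sum.inl 1)) * MvPolynomial.C (x 6) +
      MvPolynomial.C ((s:L))⁻¹ * MvPolynomial.C ((p:L))⁻¹ *
        MvPolynomial.X (Sum.inl (Sum.inl 1)) * MvPolynomial.X (Sum.inr (Sum.inl 0)) *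
        MvPolynomial.X (Sum.inr (Sum.inl 1)) * MvPolynomial.C (x 7)) * hq
  · simp only [act6, sub6, Dg, toTriple6, wt6_0, wt6_1, wt6_2, wt6_3, wt6_4, wt6_5, wt6_6,
      wt6_7, wt6_8, wt6_9, Fin.sum_univ_two, map_add, map_mul, map_pow,
      MvPolynomial.smul_eq_C_mul, Units.val_mul, Units.val_pow_eq_pow_val,
      Units.val_inv_eq_inv_val, MvPolynomial.aeval_X, MvPolynomial.aeval_C, Sum.elim_inl,
      Sum.elim_inr, Matrix.of_apply, Matrix.cons_val', Matrix.cons_val_zero, Matrix.cons_val_one,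
      Matrix.head_cons, Matrix.head_fin_const, MvPolynomial.algebraMap_eq,
      Matrix.empty_val', Matrix.cons_val_fin_one, map_zero, zero_mul, mul_zero, add_zero, zero_add]
    ring
  · simp only [act6, sub6, Dg, toTriple6, wt6_0, wt6_1, wt6_2, wt6_3, wt6_4, wt6_5, wt6_6,
      wt6_7, wt6_8, wt6_9, Fin.sum_univ_two, map_add, map_mul, map_pow,
      MvPolynomial.smul_eq_C_mul, Units.val_mul, Units.val_pow_eq_pow_val,
      Units.val_inv_eq_inv_val, MvPolynomial.aeval_X, MvPolynomial.aeval_C, Sum.elim_inl,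
      Sum.elim_inr, Matrix.of_apply, Matrix.cons_val', Matrix.cons_val_zero, Matrix.cons_val_one,
      Matrix.head_cons, Matrix.head_fin_const, MvPolynomial.algebraMap_eq,
      Matrix.empty_val', Matrix.cons_val_fin_one, map_zero, zero_mul, mul_zero, add_zero, zero_add]
    ring

lemma sub6_sub6 {L : Type*} [CommRing L] (M N M' N' : Matrix.SpecialLinearGroup (Fin 2) L)
    (v : MvPolynomial Vars6 L) :
    sub6 M N (sub6 M' N' v) = sub6 (M' * M) (N' * N) v := by
  unfold sub6
  rw [← AlgHom.comp_apply]
  refine DFunLike.congr_fun ?_ v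
  apply MvPolynomial.algHom_ext
  rintro ((i | u) | (i | u))
  · simp only [AlgHom.comp_apply, MvPolynomial.aeval_X, Sum.elim_inl, Fin.sum_univ_two,
      map_add, map_mul, MvPolynomial.aeval_C, MvPolynomial.algebraMap_eq, Matrix.SpecialLinearGroup.coe_mul,
      Matrix.mul_apply]
    ring
  · simp
  · simp only [AlgHom.comp_apply, MvPolynomial.aeval_X, Sum.elim_inr, Sum.elim_inl,
      Fin.sum_univ_two, map_add, map_mul, MvPolynomial.aeval_C, MvPolynomial.algebraMap_eq,
      Matrix.SpecialLinearGroup.coe_mul, Matrix.mul_apply]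
    ring
  · simp

lemma sub6_one {L : Type*} [CommRing L] (v : MvPolynomial Vars6 L) :
    sub6 1 1 v = v := by
  unfold sub6
  have h : ∀ w : MvPolynomial Vars6 L →ₐ[L] MvPolynomial Vars6 L, w = AlgHom.id L _ →
      w v = v := by rintro w rfl; rfl
  apply h
  apply MvPolynomial.algHom_ext
  rintro ((i | u) | (i | u))
  · fin_cases i <;> simp [Fin.sum_univ_two, Matrix.SpecialLinearGroup.coe_one, Matrix.one_apply]
  · simp
  · fin_cases i <;> simp [Fin.sum_univ_two, Matrix.SpecialLinearGroup.coe_one, Matrix.one_apply]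
  · simp

lemma sub6_smul {L : Type*} [CommRing L] (M N : Matrix.SpecialLinearGroup (Fin 2) L) (c : L)
    (v : MvPolynomial Vars6 L) : sub6 M N (c • v) = c • sub6 M N v := by
  unfold sub6; exact map_smul _ c v

abbrev G6 (L : Type*) [Field L] :=
  Matrix.SpecialLinearGroup (Fin 2) L × Matrix.SpecialLinearGroup (Fin 2) L × Lˣ × Lˣ

lemma act6_mul {L : Type*} [Field L] (g g' : G6 L)
    (x : MvPolynomial Vars6 L × MvPolynomial Vars6 L × MvPolynomial Vars6 L) :
    act6 g (act6 g' x) = act6 (g' * g) x := by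
  have e1 : (((g' * g).2.2.1 : L))⁻¹ = (g.2.2.1 : L)⁻¹ * ((g'.2.2.1 : L))⁻¹ := by
    simp [mul_comm]
  have e2 : (((g' * g).2.2.1 : L)) ^ 3 * (((g' * g).2.2.2 : L)) ^ 2
      = (g.2.2.1 : L) ^ 3 * (g.2.2.2 : L) ^ 2 * ((g'.2.2.1 : L) ^ 3 * (g'.2.2.2 : L) ^ 2) := by
    simp only [Prod.snd_mul, Prod.fst_mul, Units.val_mul]; ring
  have e3 : (((g' * g).2.2.2 : L))⁻¹ = (g.2.2.2 : L)⁻¹ * ((g'.2.2.2 : L))⁻¹ := by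
    simp [mul_comm]
  show (_, _, _) = (_, _, _)
  rw [Prod.mk.injEq, Prod.mk.injEq]
  refine ⟨?_, ?_, ?_⟩ <;>
    simp only [act6, sub6_smul, sub6_sub6, smul_smul, Prod.fst_mul, Prod.snd_mul, e1, e2, e3] <;>
    congr 1 <;> simp only [Units.val_mul, mul_inv] <;> ring

lemma act6_one {L : Type*} [Field L]
    (x : MvPolynomial Vars6 L × MvPolynomial Vars6 L × MvPolynomial Vars6 L) :
    act6 1 x = x := by
  unfold act6
  simp [sub6_one]

lemma eval_aeval' {L : Type*} [CommRing L] {n : ℕ} (p : MvPolynomial (Fin n) L)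
    (F : Fin n → Polynomial L) (t : L) :
    Polynomial.eval t (MvPolynomial.aeval F p)
      = MvPolynomial.eval (fun i => Polynomial.eval t (F i)) p := by
  rw [MvPolynomial.aeval_def]
  rw [show Polynomial.eval t (MvPolynomial.eval₂ (algebraMap L (Polynomial L)) F p)
      = (Polynomial.evalRingHom t) (MvPolynomial.eval₂ (algebraMap L (Polynomial L)) F p) from rfl]
  rw [MvPolynomial.eval₂_comp_left (Polynomial.evalRingHom t)]
  have h1 : (Polynomial.evalRingHom t).comp (algebraMap L (Polynomial L)) = RingHom.id L := by
    ext x; simp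
  rw [h1]
  rfl

lemma infinite_units {L : Type*} [Field L] [Infinite L] : Infinite Lˣ := by
  have h0 : ({(0 : L)}ᶜ : Set L).Infinite := (Set.finite_singleton 0).infinite_compl
  haveI := h0.to_subtype
  exact Infinite.of_injective
    (fun x : ({(0:L)}ᶜ : Set L) => Units.mk0 x.1 (Set.mem_compl_singleton_iff.mp x.2))
    (fun x y hxy => Subtype.ext (by simpa using congrArg Units.val hxy))

lemma not_stable6_master {L : Type*} [Field L] [IsAlgClosed L] (c : Fin 10 → L)
    (pf qf sf uf : Lˣ → Lˣ) (m : Fin 10 → ℕ)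
    (hinj : Function.Injective (fun t : Lˣ =>
      ((Dg (pf t), Dg (qf t), sf t, uf t) : G6 L)))
    (hw : ∀ (t : Lˣ) (i : Fin 10),
      (wt6 (pf t) (qf t) (sf t) (uf t) i : L) * c i = (t : L) ^ (m i) * c i) :
    ¬ Stable6 c := by
  haveI : Infinite Lˣ := infinite_units
  rintro ⟨hclosed, hfin⟩
  set lam : Lˣ → G6 L := fun t => (Dg (pf t), Dg (qf t), sf t, uf t) with hlam
  have hcurve : ∀ t : Lˣ,
      toTriple6 (fun i => (t : L) ^ (m i) * c i) = act6 (lam t) (toTriple6 c) := by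
    intro t
    rw [hlam, act6_scale]
    exact congrArg toTriple6 (funext fun i => (hw t i).symm)
  -- the limit point at t = 0
  set c0 : Fin 10 → L := fun i => (0 : L) ^ (m i) * c i with hc0def
  have hc0 : c0 ∈ {c' : Fin 10 → L | ∃ g : G6 L, toTriple6 c' = act6 g (toTriple6 c)} := by
    obtain ⟨P, hP⟩ := hclosed
    rw [hP]
    intro p hp
    set F : Fin 10 → Polynomial L := fun i => Polynomial.X ^ (m i) * Polynomial.C (c i) with hF
    have key : ∀ t : L, Polynomial.eval t (MvPolynomial.aeval F p)
        = MvPolynomial.eval (fun i => t ^ (m i) * c i) p := by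
      intro t; rw [eval_aeval']
      have : (fun i => Polynomial.eval t (F i)) = fun i => t ^ m i * c i := by
        funext i; simp [hF]; ring
      rw [this]
    have hroot : ∀ t : Lˣ, Polynomial.IsRoot (MvPolynomial.aeval F p) (t : L) := by
      intro t
      have hmem : (fun i => (t : L) ^ (m i) * c i) ∈
          {c' : Fin 10 → L | ∃ g : G6 L, toTriple6 c' = act6 g (toTriple6 c)} :=
        ⟨lam t, hcurve t⟩
      rw [hP] at hmem
      simpa [Polynomial.IsRoot, key] using hmem p hp
    have hzero : MvPolynomial.aeval F p = 0 := by
      apply Polynomial.eq_zero_of_infinite_isRoot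
      apply Set.Infinite.mono (s := ({(0:L)}ᶜ : Set L))
      · intro x hx
        exact hroot (Units.mk0 x (Set.mem_compl_singleton_iff.mp hx))
      · exact (Set.finite_singleton 0).infinite_compl
    have := key 0
    rw [hzero] at this
    simpa [hc0def] using this.symm
  obtain ⟨g₀, hg₀⟩ := hc0
  have hfix : ∀ t : Lˣ, act6 (lam t) (toTriple6 c0) = toTriple6 c0 := by
    intro t
    rw [hlam, act6_scale]
    refine congrArg toTriple6 (funext fun i => ?_)
    rcases Nat.eq_zero_or_pos (m i) with h | h
    · have h2 := hw t i
      simp only [hc0def, h, pow_zero, one_mul] at h2 ⊢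
      exact h2
    · simp [hc0def, zero_pow h.ne']
  have hstab : ∀ t : Lˣ, (g₀ * (lam t * g₀⁻¹)) ∈
      {g : G6 L | act6 g (toTriple6 c) = toTriple6 c} := by
    intro t
    show act6 (g₀ * (lam t * g₀⁻¹)) (toTriple6 c) = toTriple6 c
    rw [← act6_mul, ← hg₀, ← act6_mul, hfix t, hg₀, act6_mul, mul_inv_cancel, act6_one]
  have hinj2 : Function.Injective (fun t : Lˣ => g₀ * (lam t * g₀⁻¹)) := by
    intro x y hxy
    apply hinj
    have h1 := mul_left_cancel hxy
    exact mul_right_cancel h1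
  exact Set.infinite_of_injective_forall_mem hinj2 hstab hfin

lemma inj4 {L : Type*} [Field L] (pf qf sf : Lˣ → Lˣ) (n : ℤ) (hn : n = 1 ∨ n = -1) :
    Function.Injective (fun t : Lˣ => ((Dg (pf t), Dg (qf t), sf t, t ^ n) : G6 L)) := by
  intro x y hxy
  have h4 : x ^ n = y ^ n := congrArg (fun z : G6 L => z.2.2.2) hxy
  rcases hn with rfl | rfl
  · simpa using h4
  · have h5 : x⁻¹ = y⁻¹ := by simpa [zpow_neg, zpow_one] using h4
    exact inv_injective h5

lemma inj3 {L : Type*} [Field L] (pf qf uf : Lˣ → Lˣ) (n : ℤ) (hn : n = 1 ∨ n = -1) :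
    Function.Injective (fun t : Lˣ => ((Dg (pf t), Dg (qf t), t ^ n, uf t) : G6 L)) := by
  intro x y hxy
  have h4 : x ^ n = y ^ n := congrArg (fun z : G6 L => z.2.2.1) hxy
  rcases hn with rfl | rfl
  · simpa using h4
  · have h5 : x⁻¹ = y⁻¹ := by simpa [zpow_neg, zpow_one] using h4
    exact inv_injective h5


/-
STATEMENT 13 (Lemma 5.4 / `lem-notstable6`): if the coordinates
(a,b,d,e,g,h,j,k,o,r) of v ∈ V₆ satisfy any one of the eleven listed vanishing
conditions, then v is not stable for the action of G₆ = SL₂(L) × SL₂(L) × Lˣ × Lˣ.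
-/
set_option maxHeartbeats 1600000 in
theorem not_stable6_of_vanishing_conditions
    {L : Type*} [Field L] [IsAlgClosed L]
    (a b d e g h j k o r : L)
    (hcond :
      (b = 0 ∧ e = 0 ∧ k = 0) ∨
      (d = 0 ∧ e = 0 ∧ k = 0) ∨
      (e = 0 ∧ h = 0 ∧ k = 0) ∨
      (e = 0 ∧ k = 0 ∧ r = 0) ∨
      (g = 0 ∧ h = 0) ∨
      (o = 0 ∧ r = 0) ∨
      (d = 0 ∧ e = 0 ∧ r = 0) ∨
      (e = 0 ∧ h = 0 ∧ r = 0) ∨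
      (b = 0 ∧ h = 0 ∧ k = 0) ∨
      (d = 0 ∧ j = 0 ∧ r = 0) ∨
      (a = 0 ∧ b = 0 ∧ j = 0 ∧ h = 0)) :
    ¬ Stable6 ![a, b, d, e, g, h, j, k, o, r] := by
  rcases hcond with ⟨hz0, hz1, hz2⟩ | ⟨hz0, hz1, hz2⟩ | ⟨hz0, hz1, hz2⟩ | ⟨hz0, hz1, hz2⟩ | ⟨hz0, hz1⟩ | ⟨hz0, hz1⟩ | ⟨hz0, hz1, hz2⟩ | ⟨hz0, hz1, hz2⟩ | ⟨hz0, hz1, hz2⟩ | ⟨hz0, hz1, hz2⟩ | ⟨hz0, hz1, hz2, hz3⟩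
  · refine not_stable6_master _ (fun t : Lˣ => t^((3):ℤ)) (fun t : Lˣ => t^((0):ℤ)) (fun t : Lˣ => t^((2):ℤ)) (fun t : Lˣ => t^((-1):ℤ))
      ![1,0,1,0,7,1,1,0,1,1] (inj4 (fun t : Lˣ => t^((3):ℤ)) (fun t : Lˣ => t^((0):ℤ)) (fun t : Lˣ => t^((2):ℤ)) (-1) (Or.inr rfl)) ?_
    intro t i
    fin_cases i
    · congr 1
      show ((t^((3):ℤ) * (t^((0):ℤ))^2 * (t^((2):ℤ))⁻¹ : Lˣ) : L) = (t : L) ^ (1 : ℕ)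
      rw [show (t^((3):ℤ) * (t^((0):ℤ))^2 * (t^((2):ℤ))⁻¹ : Lˣ) = t ^ (1 : ℕ) by group <;> (try exact (pow_two t).symm)]
      exact Units.val_pow_eq_pow_val t 1
    · show _ * b = _ * b
      rw [hz0, mul_zero, mul_zero]
    · congr 1
      show ((t^((3):ℤ) * ((t^((0):ℤ))⁻¹)^2 * (t^((2):ℤ))⁻¹ : Lˣ) : L) = (t : L) ^ (1 : ℕ)
      rw [show (t^((3):ℤ) * ((t^((0):ℤ))⁻¹)^2 * (t^((2):ℤ))⁻¹ : Lˣ) = t ^ (1 : ℕ) by group <;> (try exact (pow_two t).symm)]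
      exact Units.val_pow_eq_pow_val t 1
    · show _ * e = _ * e
      rw [hz1, mul_zero, mul_zero]
    · congr 1
      show ((t^((3):ℤ) * (t^((2):ℤ))^3 * (t^((-1):ℤ))^2 : Lˣ) : L) = (t : L) ^ (7 : ℕ)
      rw [show (t^((3):ℤ) * (t^((2):ℤ))^3 * (t^((-1):ℤ))^2 : Lˣ) = t ^ (7 : ℕ) by group <;> (try exact (pow_two t).symm)]
      exact Units.val_pow_eq_pow_val t 7
    · congr 1
      show (((t^((3):ℤ))⁻¹ * (t^((2):ℤ))^3 * (t^((-1):ℤ))^2 : Lˣ) : L) = (t : L) ^ (1 : ℕ)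
      rw [show ((t^((3):ℤ))⁻¹ * (t^((2):ℤ))^3 * (t^((-1):ℤ))^2 : Lˣ) = t ^ (1 : ℕ) by group <;> (try exact (pow_two t).symm)]
      exact Units.val_pow_eq_pow_val t 1
    · congr 1
      show ((t^((3):ℤ) * (t^((2):ℤ))⁻¹ : Lˣ) : L) = (t : L) ^ (1 : ℕ)
      rw [show (t^((3):ℤ) * (t^((2):ℤ))⁻¹ : Lˣ) = t ^ (1 : ℕ) by group <;> (try exact (pow_two t).symm)]
      exact Units.val_pow_eq_pow_val t 1
    · show _ * k = _ * k
      rw [hz2, mul_zero, mul_zero]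
    · congr 1
      show ((t^((0):ℤ) * (t^((-1):ℤ))⁻¹ : Lˣ) : L) = (t : L) ^ (1 : ℕ)
      rw [show (t^((0):ℤ) * (t^((-1):ℤ))⁻¹ : Lˣ) = t ^ (1 : ℕ) by group <;> (try exact (pow_two t).symm)]
      exact Units.val_pow_eq_pow_val t 1
    · congr 1
      show (((t^((0):ℤ))⁻¹ * (t^((-1):ℤ))⁻¹ : Lˣ) : L) = (t : L) ^ (1 : ℕ)
      rw [show ((t^((0):ℤ))⁻¹ * (t^((-1):ℤ))⁻¹ : Lˣ) = t ^ (1 : ℕ) by group <;> (try exact (pow_two t).symm)]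
      exact Units.val_pow_eq_pow_val t 1
  · refine not_stable6_master _ (fun t : Lˣ => t^((1):ℤ)) (fun t : Lˣ => t^((1):ℤ)) (fun t : Lˣ => t^((1):ℤ)) (fun t : Lˣ => t^((-1):ℤ))
      ![2,0,0,0,2,0,0,0,2,0] (inj4 (fun t : Lˣ => t^((1):ℤ)) (fun t : Lˣ => t^((1):ℤ)) (fun t : Lˣ => t^((1):ℤ)) (-1) (Or.inr rfl)) ?_
    intro t i
    fin_cases i
    · congr 1
      show ((t^((1):ℤ) * (t^((1):ℤ))^2 * (t^((1):ℤ))⁻¹ : Lˣ) : L) = (t : L) ^ (2 : ℕ)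
      rw [show (t^((1):ℤ) * (t^((1):ℤ))^2 * (t^((1):ℤ))⁻¹ : Lˣ) = t ^ (2 : ℕ) by group <;> (try exact (pow_two t).symm)]
      exact Units.val_pow_eq_pow_val t 2
    · congr 1
      show (((t^((1):ℤ))⁻¹ * (t^((1):ℤ))^2 * (t^((1):ℤ))⁻¹ : Lˣ) : L) = (t : L) ^ (0 : ℕ)
      rw [show ((t^((1):ℤ))⁻¹ * (t^((1):ℤ))^2 * (t^((1):ℤ))⁻¹ : Lˣ) = t ^ (0 : ℕ) by group <;> (try exact (pow_two t).symm)]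
      exact Units.val_pow_eq_pow_val t 0
    · show _ * d = _ * d
      rw [hz0, mul_zero, mul_zero]
    · show _ * e = _ * e
      rw [hz1, mul_zero, mul_zero]
    · congr 1
      show ((t^((1):ℤ) * (t^((1):ℤ))^3 * (t^((-1):ℤ))^2 : Lˣ) : L) = (t : L) ^ (2 : ℕ)
      rw [show (t^((1):ℤ) * (t^((1):ℤ))^3 * (t^((-1):ℤ))^2 : Lˣ) = t ^ (2 : ℕ) by group <;> (try exact (pow_two t).symm)]
      exact Units.val_pow_eq_pow_val t 2
    · congr 1
      show (((t^((1):ℤ))⁻¹ * (t^((1):ℤ))^3 * (t^((-1):ℤ))^2 : Lˣ) : L) = (t : L) ^ (0 : ℕ)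
      rw [show ((t^((1):ℤ))⁻¹ * (t^((1):ℤ))^3 * (t^((-1):ℤ))^2 : Lˣ) = t ^ (0 : ℕ) by group <;> (try exact (pow_two t).symm)]
      exact Units.val_pow_eq_pow_val t 0
    · congr 1
      show ((t^((1):ℤ) * (t^((1):ℤ))⁻¹ : Lˣ) : L) = (t : L) ^ (0 : ℕ)
      rw [show (t^((1):ℤ) * (t^((1):ℤ))⁻¹ : Lˣ) = t ^ (0 : ℕ) by group <;> (try exact (pow_two t).symm)]
      exact Units.val_pow_eq_pow_val t 0
    · show _ * k = _ * k
      rw [hz2, mul_zero, mul_zero]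
    · congr 1
      show ((t^((1):ℤ) * (t^((-1):ℤ))⁻¹ : Lˣ) : L) = (t : L) ^ (2 : ℕ)
      rw [show (t^((1):ℤ) * (t^((-1):ℤ))⁻¹ : Lˣ) = t ^ (2 : ℕ) by group <;> (try exact (pow_two t).symm)]
      exact Units.val_pow_eq_pow_val t 2
    · congr 1
      show (((t^((1):ℤ))⁻¹ * (t^((-1):ℤ))⁻¹ : Lˣ) : L) = (t : L) ^ (0 : ℕ)
      rw [show ((t^((1):ℤ))⁻¹ * (t^((-1):ℤ))⁻¹ : Lˣ) = t ^ (0 : ℕ) by group <;> (try exact (pow_two t).symm)]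
      exact Units.val_pow_eq_pow_val t 0
  · refine not_stable6_master _ (fun t : Lˣ => t^((2):ℤ)) (fun t : Lˣ => t^((1):ℤ)) (fun t : Lˣ => t^((0):ℤ)) (fun t : Lˣ => t^((-1):ℤ))
      ![4,0,0,0,0,0,2,0,2,0] (inj4 (fun t : Lˣ => t^((2):ℤ)) (fun t : Lˣ => t^((1):ℤ)) (fun t : Lˣ => t^((0):ℤ)) (-1) (Or.inr rfl)) ?_
    intro t i
    fin_cases i
    · congr 1
      show ((t^((2):ℤ) * (t^((1):ℤ))^2 * (t^((0):ℤ))⁻¹ : Lˣ) : L) = (t : L) ^ (4 : ℕ)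
      rw [show (t^((2):ℤ) * (t^((1):ℤ))^2 * (t^((0):ℤ))⁻¹ : Lˣ) = t ^ (4 : ℕ) by group <;> (try exact (pow_two t).symm)]
      exact Units.val_pow_eq_pow_val t 4
    · congr 1
      show (((t^((2):ℤ))⁻¹ * (t^((1):ℤ))^2 * (t^((0):ℤ))⁻¹ : Lˣ) : L) = (t : L) ^ (0 : ℕ)
      rw [show ((t^((2):ℤ))⁻¹ * (t^((1):ℤ))^2 * (t^((0):ℤ))⁻¹ : Lˣ) = t ^ (0 : ℕ) by group <;> (try exact (pow_two t).symm)]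
      exact Units.val_pow_eq_pow_val t 0
    · congr 1
      show ((t^((2):ℤ) * ((t^((1):ℤ))⁻¹)^2 * (t^((0):ℤ))⁻¹ : Lˣ) : L) = (t : L) ^ (0 : ℕ)
      rw [show (t^((2):ℤ) * ((t^((1):ℤ))⁻¹)^2 * (t^((0):ℤ))⁻¹ : Lˣ) = t ^ (0 : ℕ) by group <;> (try exact (pow_two t).symm)]
      exact Units.val_pow_eq_pow_val t 0
    · show _ * e = _ * e
      rw [hz0, mul_zero, mul_zero]
    · congr 1
      show ((t^((2):ℤ) * (t^((0):ℤ))^3 * (t^((-1):ℤ))^2 : Lˣ) : L) = (t : L) ^ (0 : ℕ)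
      rw [show (t^((2):ℤ) * (t^((0):ℤ))^3 * (t^((-1):ℤ))^2 : Lˣ) = t ^ (0 : ℕ) by group <;> (try exact (pow_two t).symm)]
      exact Units.val_pow_eq_pow_val t 0
    · show _ * h = _ * h
      rw [hz1, mul_zero, mul_zero]
    · congr 1
      show ((t^((2):ℤ) * (t^((0):ℤ))⁻¹ : Lˣ) : L) = (t : L) ^ (2 : ℕ)
      rw [show (t^((2):ℤ) * (t^((0):ℤ))⁻¹ : Lˣ) = t ^ (2 : ℕ) by group <;> (try exact (pow_two t).symm)]
      exact Units.val_pow_eq_pow_val t 2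
    · show _ * k = _ * k
      rw [hz2, mul_zero, mul_zero]
    · congr 1
      show ((t^((1):ℤ) * (t^((-1):ℤ))⁻¹ : Lˣ) : L) = (t : L) ^ (2 : ℕ)
      rw [show (t^((1):ℤ) * (t^((-1):ℤ))⁻¹ : Lˣ) = t ^ (2 : ℕ) by group <;> (try exact (pow_two t).symm)]
      exact Units.val_pow_eq_pow_val t 2
    · congr 1
      show (((t^((1):ℤ))⁻¹ * (t^((-1):ℤ))⁻¹ : Lˣ) : L) = (t : L) ^ (0 : ℕ)
      rw [show ((t^((1):ℤ))⁻¹ * (t^((-1):ℤ))⁻¹ : Lˣ) = t ^ (0 : ℕ) by group <;> (try exact (pow_two t).symm)]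
      exact Units.val_pow_eq_pow_val t 0
  · refine not_stable6_master _ (fun t : Lˣ => t^((2):ℤ)) (fun t : Lˣ => t^((1):ℤ)) (fun t : Lˣ => t^((0):ℤ)) (fun t : Lˣ => t^((1):ℤ))
      ![4,0,0,0,4,0,2,0,0,0] (inj4 (fun t : Lˣ => t^((2):ℤ)) (fun t : Lˣ => t^((1):ℤ)) (fun t : Lˣ => t^((0):ℤ)) (1) (Or.inl rfl)) ?_
    intro t i
    fin_cases i
    · congr 1
      show ((t^((2):ℤ) * (t^((1):ℤ))^2 * (t^((0):ℤ))⁻¹ : Lˣ) : L) = (t : L) ^ (4 : ℕ)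
      rw [show (t^((2):ℤ) * (t^((1):ℤ))^2 * (t^((0):ℤ))⁻¹ : Lˣ) = t ^ (4 : ℕ) by group <;> (try exact (pow_two t).symm)]
      exact Units.val_pow_eq_pow_val t 4
    · congr 1
      show (((t^((2):ℤ))⁻¹ * (t^((1):ℤ))^2 * (t^((0):ℤ))⁻¹ : Lˣ) : L) = (t : L) ^ (0 : ℕ)
      rw [show ((t^((2):ℤ))⁻¹ * (t^((1):ℤ))^2 * (t^((0):ℤ))⁻¹ : Lˣ) = t ^ (0 : ℕ) by group <;> (try exact (pow_two t).symm)]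
      exact Units.val_pow_eq_pow_val t 0
    · congr 1
      show ((t^((2):ℤ) * ((t^((1):ℤ))⁻¹)^2 * (t^((0):ℤ))⁻¹ : Lˣ) : L) = (t : L) ^ (0 : ℕ)
      rw [show (t^((2):ℤ) * ((t^((1):ℤ))⁻¹)^2 * (t^((0):ℤ))⁻¹ : Lˣ) = t ^ (0 : ℕ) by group <;> (try exact (pow_two t).symm)]
      exact Units.val_pow_eq_pow_val t 0
    · show _ * e = _ * e
      rw [hz0, mul_zero, mul_zero]
    · congr 1
      show ((t^((2):ℤ) * (t^((0):ℤ))^3 * (t^((1):ℤ))^2 : Lˣ) : L) = (t : L) ^ (4 : ℕ)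
      rw [show (t^((2):ℤ) * (t^((0):ℤ))^3 * (t^((1):ℤ))^2 : Lˣ) = t ^ (4 : ℕ) by group <;> (try exact (pow_two t).symm)]
      exact Units.val_pow_eq_pow_val t 4
    · congr 1
      show (((t^((2):ℤ))⁻¹ * (t^((0):ℤ))^3 * (t^((1):ℤ))^2 : Lˣ) : L) = (t : L) ^ (0 : ℕ)
      rw [show ((t^((2):ℤ))⁻¹ * (t^((0):ℤ))^3 * (t^((1):ℤ))^2 : Lˣ) = t ^ (0 : ℕ) by group <;> (try exact (pow_two t).symm)]
      exact Units.val_pow_eq_pow_val t 0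
    · congr 1
      show ((t^((2):ℤ) * (t^((0):ℤ))⁻¹ : Lˣ) : L) = (t : L) ^ (2 : ℕ)
      rw [show (t^((2):ℤ) * (t^((0):ℤ))⁻¹ : Lˣ) = t ^ (2 : ℕ) by group <;> (try exact (pow_two t).symm)]
      exact Units.val_pow_eq_pow_val t 2
    · show _ * k = _ * k
      rw [hz1, mul_zero, mul_zero]
    · congr 1
      show ((t^((1):ℤ) * (t^((1):ℤ))⁻¹ : Lˣ) : L) = (t : L) ^ (0 : ℕ)
      rw [show (t^((1):ℤ) * (t^((1):ℤ))⁻¹ : Lˣ) = t ^ (0 : ℕ) by group <;> (try exact (pow_two t).symm)]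
      exact Units.val_pow_eq_pow_val t 0
    · show _ * r = _ * r
      rw [hz2, mul_zero, mul_zero]
  · refine not_stable6_master _ (fun t : Lˣ => t^((0):ℤ)) (fun t : Lˣ => t^((0):ℤ)) (fun t : Lˣ => t^((-1):ℤ)) (fun t : Lˣ => t^((-1):ℤ))
      ![1,1,1,1,0,0,1,1,1,1] (inj4 (fun t : Lˣ => t^((0):ℤ)) (fun t : Lˣ => t^((0):ℤ)) (fun t : Lˣ => t^((-1):ℤ)) (-1) (Or.inr rfl)) ?_
    intro t i
    fin_cases i
    · congr 1
      show ((t^((0):ℤ) * (t^((0):ℤ))^2 * (t^((-1):ℤ))⁻¹ : Lˣ) : L) = (t : L) ^ (1 : ℕ)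
      rw [show (t^((0):ℤ) * (t^((0):ℤ))^2 * (t^((-1):ℤ))⁻¹ : Lˣ) = t ^ (1 : ℕ) by group <;> (try exact (pow_two t).symm)]
      exact Units.val_pow_eq_pow_val t 1
    · congr 1
      show (((t^((0):ℤ))⁻¹ * (t^((0):ℤ))^2 * (t^((-1):ℤ))⁻¹ : Lˣ) : L) = (t : L) ^ (1 : ℕ)
      rw [show ((t^((0):ℤ))⁻¹ * (t^((0):ℤ))^2 * (t^((-1):ℤ))⁻¹ : Lˣ) = t ^ (1 : ℕ) by group <;> (try exact (pow_two t).symm)]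
      exact Units.val_pow_eq_pow_val t 1
    · congr 1
      show ((t^((0):ℤ) * ((t^((0):ℤ))⁻¹)^2 * (t^((-1):ℤ))⁻¹ : Lˣ) : L) = (t : L) ^ (1 : ℕ)
      rw [show (t^((0):ℤ) * ((t^((0):ℤ))⁻¹)^2 * (t^((-1):ℤ))⁻¹ : Lˣ) = t ^ (1 : ℕ) by group <;> (try exact (pow_two t).symm)]
      exact Units.val_pow_eq_pow_val t 1
    · congr 1
      show (((t^((0):ℤ))⁻¹ * ((t^((0):ℤ))⁻¹)^2 * (t^((-1):ℤ))⁻¹ : Lˣ) : L) = (t : L) ^ (1 : ℕ)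
      rw [show ((t^((0):ℤ))⁻¹ * ((t^((0):ℤ))⁻¹)^2 * (t^((-1):ℤ))⁻¹ : Lˣ) = t ^ (1 : ℕ) by group <;> (try exact (pow_two t).symm)]
      exact Units.val_pow_eq_pow_val t 1
    · show _ * g = _ * g
      rw [hz0, mul_zero, mul_zero]
    · show _ * h = _ * h
      rw [hz1, mul_zero, mul_zero]
    · congr 1
      show ((t^((0):ℤ) * (t^((-1):ℤ))⁻¹ : Lˣ) : L) = (t : L) ^ (1 : ℕ)
      rw [show (t^((0):ℤ) * (t^((-1):ℤ))⁻¹ : Lˣ) = t ^ (1 : ℕ) by group <;> (try exact (pow_two t).symm)]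
      exact Units.val_pow_eq_pow_val t 1
    · congr 1
      show (((t^((0):ℤ))⁻¹ * (t^((-1):ℤ))⁻¹ : Lˣ) : L) = (t : L) ^ (1 : ℕ)
      rw [show ((t^((0):ℤ))⁻¹ * (t^((-1):ℤ))⁻¹ : Lˣ) = t ^ (1 : ℕ) by group <;> (try exact (pow_two t).symm)]
      exact Units.val_pow_eq_pow_val t 1
    · congr 1
      show ((t^((0):ℤ) * (t^((-1):ℤ))⁻¹ : Lˣ) : L) = (t : L) ^ (1 : ℕ)
      rw [show (t^((0):ℤ) * (t^((-1):ℤ))⁻¹ : Lˣ) = t ^ (1 : ℕ) by group <;> (try exact (pow_two t).symm)]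
      exact Units.val_pow_eq_pow_val t 1
    · congr 1
      show (((t^((0):ℤ))⁻¹ * (t^((-1):ℤ))⁻¹ : Lˣ) : L) = (t : L) ^ (1 : ℕ)
      rw [show ((t^((0):ℤ))⁻¹ * (t^((-1):ℤ))⁻¹ : Lˣ) = t ^ (1 : ℕ) by group <;> (try exact (pow_two t).symm)]
      exact Units.val_pow_eq_pow_val t 1
  · refine not_stable6_master _ (fun t : Lˣ => t^((0):ℤ)) (fun t : Lˣ => t^((0):ℤ)) (fun t : Lˣ => t^((-1):ℤ)) (fun t : Lˣ => t^((2):ℤ))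
      ![1,1,1,1,1,1,1,1,0,0] (inj3 (fun t : Lˣ => t^((0):ℤ)) (fun t : Lˣ => t^((0):ℤ)) (fun t : Lˣ => t^((2):ℤ)) (-1) (Or.inr rfl)) ?_
    intro t i
    fin_cases i
    · congr 1
      show ((t^((0):ℤ) * (t^((0):ℤ))^2 * (t^((-1):ℤ))⁻¹ : Lˣ) : L) = (t : L) ^ (1 : ℕ)
      rw [show (t^((0):ℤ) * (t^((0):ℤ))^2 * (t^((-1):ℤ))⁻¹ : Lˣ) = t ^ (1 : ℕ) by group <;> (try exact (pow_two t).symm)]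
      exact Units.val_pow_eq_pow_val t 1
    · congr 1
      show (((t^((0):ℤ))⁻¹ * (t^((0):ℤ))^2 * (t^((-1):ℤ))⁻¹ : Lˣ) : L) = (t : L) ^ (1 : ℕ)
      rw [show ((t^((0):ℤ))⁻¹ * (t^((0):ℤ))^2 * (t^((-1):ℤ))⁻¹ : Lˣ) = t ^ (1 : ℕ) by group <;> (try exact (pow_two t).symm)]
      exact Units.val_pow_eq_pow_val t 1
    · congr 1
      show ((t^((0):ℤ) * ((t^((0):ℤ))⁻¹)^2 * (t^((-1):ℤ))⁻¹ : Lˣ) : L) = (t : L) ^ (1 : ℕ)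
      rw [show (t^((0):ℤ) * ((t^((0):ℤ))⁻¹)^2 * (t^((-1):ℤ))⁻¹ : Lˣ) = t ^ (1 : ℕ) by group <;> (try exact (pow_two t).symm)]
      exact Units.val_pow_eq_pow_val t 1
    · congr 1
      show (((t^((0):ℤ))⁻¹ * ((t^((0):ℤ))⁻¹)^2 * (t^((-1):ℤ))⁻¹ : Lˣ) : L) = (t : L) ^ (1 : ℕ)
      rw [show ((t^((0):ℤ))⁻¹ * ((t^((0):ℤ))⁻¹)^2 * (t^((-1):ℤ))⁻¹ : Lˣ) = t ^ (1 : ℕ) by group <;> (try exact (pow_two t).symm)]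
      exact Units.val_pow_eq_pow_val t 1
    · congr 1
      show ((t^((0):ℤ) * (t^((-1):ℤ))^3 * (t^((2):ℤ))^2 : Lˣ) : L) = (t : L) ^ (1 : ℕ)
      rw [show (t^((0):ℤ) * (t^((-1):ℤ))^3 * (t^((2):ℤ))^2 : Lˣ) = t ^ (1 : ℕ) by group <;> (try exact (pow_two t).symm)]
      exact Units.val_pow_eq_pow_val t 1
    · congr 1
      show (((t^((0):ℤ))⁻¹ * (t^((-1):ℤ))^3 * (t^((2):ℤ))^2 : Lˣ) : L) = (t : L) ^ (1 : ℕ)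
      rw [show ((t^((0):ℤ))⁻¹ * (t^((-1):ℤ))^3 * (t^((2):ℤ))^2 : Lˣ) = t ^ (1 : ℕ) by group <;> (try exact (pow_two t).symm)]
      exact Units.val_pow_eq_pow_val t 1
    · congr 1
      show ((t^((0):ℤ) * (t^((-1):ℤ))⁻¹ : Lˣ) : L) = (t : L) ^ (1 : ℕ)
      rw [show (t^((0):ℤ) * (t^((-1):ℤ))⁻¹ : Lˣ) = t ^ (1 : ℕ) by group <;> (try exact (pow_two t).symm)]
      exact Units.val_pow_eq_pow_val t 1
    · congr 1
      show (((t^((0):ℤ))⁻¹ * (t^((-1):ℤ))⁻¹ : Lˣ) : L) = (t : L) ^ (1 : ℕ)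
      rw [show ((t^((0):ℤ))⁻¹ * (t^((-1):ℤ))⁻¹ : Lˣ) = t ^ (1 : ℕ) by group <;> (try exact (pow_two t).symm)]
      exact Units.val_pow_eq_pow_val t 1
    · show _ * o = _ * o
      rw [hz0, mul_zero, mul_zero]
    · show _ * r = _ * r
      rw [hz1, mul_zero, mul_zero]
  · refine not_stable6_master _ (fun t : Lˣ => t^((0):ℤ)) (fun t : Lˣ => t^((2):ℤ)) (fun t : Lˣ => t^((-1):ℤ)) (fun t : Lˣ => t^((2):ℤ))
      ![5,5,0,0,1,1,1,1,0,0] (inj3 (fun t : Lˣ => t^((0):ℤ)) (fun t : Lˣ => t^((2):ℤ)) (fun t : Lˣ => t^((2):ℤ)) (-1) (Or.inr rfl)) ?_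
    intro t i
    fin_cases i
    · congr 1
      show ((t^((0):ℤ) * (t^((2):ℤ))^2 * (t^((-1):ℤ))⁻¹ : Lˣ) : L) = (t : L) ^ (5 : ℕ)
      rw [show (t^((0):ℤ) * (t^((2):ℤ))^2 * (t^((-1):ℤ))⁻¹ : Lˣ) = t ^ (5 : ℕ) by group <;> (try exact (pow_two t).symm)]
      exact Units.val_pow_eq_pow_val t 5
    · congr 1
      show (((t^((0):ℤ))⁻¹ * (t^((2):ℤ))^2 * (t^((-1):ℤ))⁻¹ : Lˣ) : L) = (t : L) ^ (5 : ℕ)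
      rw [show ((t^((0):ℤ))⁻¹ * (t^((2):ℤ))^2 * (t^((-1):ℤ))⁻¹ : Lˣ) = t ^ (5 : ℕ) by group <;> (try exact (pow_two t).symm)]
      exact Units.val_pow_eq_pow_val t 5
    · show _ * d = _ * d
      rw [hz0, mul_zero, mul_zero]
    · show _ * e = _ * e
      rw [hz1, mul_zero, mul_zero]
    · congr 1
      show ((t^((0):ℤ) * (t^((-1):ℤ))^3 * (t^((2):ℤ))^2 : Lˣ) : L) = (t : L) ^ (1 : ℕ)
      rw [show (t^((0):ℤ) * (t^((-1):ℤ))^3 * (t^((2):ℤ))^2 : Lˣ) = t ^ (1 : ℕ) by group <;> (try exact (pow_two t).symm)]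
      exact Units.val_pow_eq_pow_val t 1
    · congr 1
      show (((t^((0):ℤ))⁻¹ * (t^((-1):ℤ))^3 * (t^((2):ℤ))^2 : Lˣ) : L) = (t : L) ^ (1 : ℕ)
      rw [show ((t^((0):ℤ))⁻¹ * (t^((-1):ℤ))^3 * (t^((2):ℤ))^2 : Lˣ) = t ^ (1 : ℕ) by group <;> (try exact (pow_two t).symm)]
      exact Units.val_pow_eq_pow_val t 1
    · congr 1
      show ((t^((0):ℤ) * (t^((-1):ℤ))⁻¹ : Lˣ) : L) = (t : L) ^ (1 : ℕ)
      rw [show (t^((0):ℤ) * (t^((-1):ℤ))⁻¹ : Lˣ) = t ^ (1 : ℕ) by group <;> (try exact (pow_two t).symm)]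
      exact Units.val_pow_eq_pow_val t 1
    · congr 1
      show (((t^((0):ℤ))⁻¹ * (t^((-1):ℤ))⁻¹ : Lˣ) : L) = (t : L) ^ (1 : ℕ)
      rw [show ((t^((0):ℤ))⁻¹ * (t^((-1):ℤ))⁻¹ : Lˣ) = t ^ (1 : ℕ) by group <;> (try exact (pow_two t).symm)]
      exact Units.val_pow_eq_pow_val t 1
    · congr 1
      show ((t^((2):ℤ) * (t^((2):ℤ))⁻¹ : Lˣ) : L) = (t : L) ^ (0 : ℕ)
      rw [show (t^((2):ℤ) * (t^((2):ℤ))⁻¹ : Lˣ) = t ^ (0 : ℕ) by group <;> (try exact (pow_two t).symm)]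
      exact Units.val_pow_eq_pow_val t 0
    · show _ * r = _ * r
      rw [hz2, mul_zero, mul_zero]
  · refine not_stable6_master _ (fun t : Lˣ => t^((1):ℤ)) (fun t : Lˣ => t^((1):ℤ)) (fun t : Lˣ => t^((-1):ℤ)) (fun t : Lˣ => t^((1):ℤ))
      ![4,2,0,0,0,0,2,0,0,0] (inj4 (fun t : Lˣ => t^((1):ℤ)) (fun t : Lˣ => t^((1):ℤ)) (fun t : Lˣ => t^((-1):ℤ)) (1) (Or.inl rfl)) ?_
    intro t i
    fin_cases i
    · congr 1
      show ((t^((1):ℤ) * (t^((1):ℤ))^2 * (t^((-1):ℤ))⁻¹ : Lˣ) : L) = (t : L) ^ (4 : ℕ)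
      rw [show (t^((1):ℤ) * (t^((1):ℤ))^2 * (t^((-1):ℤ))⁻¹ : Lˣ) = t ^ (4 : ℕ) by group <;> (try exact (pow_two t).symm)]
      exact Units.val_pow_eq_pow_val t 4
    · congr 1
      show (((t^((1):ℤ))⁻¹ * (t^((1):ℤ))^2 * (t^((-1):ℤ))⁻¹ : Lˣ) : L) = (t : L) ^ (2 : ℕ)
      rw [show ((t^((1):ℤ))⁻¹ * (t^((1):ℤ))^2 * (t^((-1):ℤ))⁻¹ : Lˣ) = t ^ (2 : ℕ) by group <;> (try exact (pow_two t).symm)]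
      exact Units.val_pow_eq_pow_val t 2
    · congr 1
      show ((t^((1):ℤ) * ((t^((1):ℤ))⁻¹)^2 * (t^((-1):ℤ))⁻¹ : Lˣ) : L) = (t : L) ^ (0 : ℕ)
      rw [show (t^((1):ℤ) * ((t^((1):ℤ))⁻¹)^2 * (t^((-1):ℤ))⁻¹ : Lˣ) = t ^ (0 : ℕ) by group <;> (try exact (pow_two t).symm)]
      exact Units.val_pow_eq_pow_val t 0
    · show _ * e = _ * e
      rw [hz0, mul_zero, mul_zero]
    · congr 1
      show ((t^((1):ℤ) * (t^((-1):ℤ))^3 * (t^((1):ℤ))^2 : Lˣ) : L) = (t : L) ^ (0 : ℕ)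
      rw [show (t^((1):ℤ) * (t^((-1):ℤ))^3 * (t^((1):ℤ))^2 : Lˣ) = t ^ (0 : ℕ) by group <;> (try exact (pow_two t).symm)]
      exact Units.val_pow_eq_pow_val t 0
    · show _ * h = _ * h
      rw [hz1, mul_zero, mul_zero]
    · congr 1
      show ((t^((1):ℤ) * (t^((-1):ℤ))⁻¹ : Lˣ) : L) = (t : L) ^ (2 : ℕ)
      rw [show (t^((1):ℤ) * (t^((-1):ℤ))⁻¹ : Lˣ) = t ^ (2 : ℕ) by group <;> (try exact (pow_two t).symm)]
      exact Units.val_pow_eq_pow_val t 2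
    · congr 1
      show (((t^((1):ℤ))⁻¹ * (t^((-1):ℤ))⁻¹ : Lˣ) : L) = (t : L) ^ (0 : ℕ)
      rw [show ((t^((1):ℤ))⁻¹ * (t^((-1):ℤ))⁻¹ : Lˣ) = t ^ (0 : ℕ) by group <;> (try exact (pow_two t).symm)]
      exact Units.val_pow_eq_pow_val t 0
    · congr 1
      show ((t^((1):ℤ) * (t^((1):ℤ))⁻¹ : Lˣ) : L) = (t : L) ^ (0 : ℕ)
      rw [show (t^((1):ℤ) * (t^((1):ℤ))⁻¹ : Lˣ) = t ^ (0 : ℕ) by group <;> (try exact (pow_two t).symm)]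
      exact Units.val_pow_eq_pow_val t 0
    · show _ * r = _ * r
      rw [hz2, mul_zero, mul_zero]
  · refine not_stable6_master _ (fun t : Lˣ => t^((2):ℤ)) (fun t : Lˣ => t^((-1):ℤ)) (fun t : Lˣ => t^((0):ℤ)) (fun t : Lˣ => t^((-1):ℤ))
      ![0,0,4,0,0,0,2,0,0,2] (inj4 (fun t : Lˣ => t^((2):ℤ)) (fun t : Lˣ => t^((-1):ℤ)) (fun t : Lˣ => t^((0):ℤ)) (-1) (Or.inr rfl)) ?_
    intro t i
    fin_cases i
    · congr 1
      show ((t^((2):ℤ) * (t^((-1):ℤ))^2 * (t^((0):ℤ))⁻¹ : Lˣ) : L) = (t : L) ^ (0 : ℕ)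
      rw [show (t^((2):ℤ) * (t^((-1):ℤ))^2 * (t^((0):ℤ))⁻¹ : Lˣ) = t ^ (0 : ℕ) by group <;> (try exact (pow_two t).symm)]
      exact Units.val_pow_eq_pow_val t 0
    · show _ * b = _ * b
      rw [hz0, mul_zero, mul_zero]
    · congr 1
      show ((t^((2):ℤ) * ((t^((-1):ℤ))⁻¹)^2 * (t^((0):ℤ))⁻¹ : Lˣ) : L) = (t : L) ^ (4 : ℕ)
      rw [show (t^((2):ℤ) * ((t^((-1):ℤ))⁻¹)^2 * (t^((0):ℤ))⁻¹ : Lˣ) = t ^ (4 : ℕ) by group <;> (try exact (pow_two t).symm)]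
      exact Units.val_pow_eq_pow_val t 4
    · congr 1
      show (((t^((2):ℤ))⁻¹ * ((t^((-1):ℤ))⁻¹)^2 * (t^((0):ℤ))⁻¹ : Lˣ) : L) = (t : L) ^ (0 : ℕ)
      rw [show ((t^((2):ℤ))⁻¹ * ((t^((-1):ℤ))⁻¹)^2 * (t^((0):ℤ))⁻¹ : Lˣ) = t ^ (0 : ℕ) by group <;> (try exact (pow_two t).symm)]
      exact Units.val_pow_eq_pow_val t 0
    · congr 1
      show ((t^((2):ℤ) * (t^((0):ℤ))^3 * (t^((-1):ℤ))^2 : Lˣ) : L) = (t : L) ^ (0 : ℕ)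
      rw [show (t^((2):ℤ) * (t^((0):ℤ))^3 * (t^((-1):ℤ))^2 : Lˣ) = t ^ (0 : ℕ) by group <;> (try exact (pow_two t).symm)]
      exact Units.val_pow_eq_pow_val t 0
    · show _ * h = _ * h
      rw [hz1, mul_zero, mul_zero]
    · congr 1
      show ((t^((2):ℤ) * (t^((0):ℤ))⁻¹ : Lˣ) : L) = (t : L) ^ (2 : ℕ)
      rw [show (t^((2):ℤ) * (t^((0):ℤ))⁻¹ : Lˣ) = t ^ (2 : ℕ) by group <;> (try exact (pow_two t).symm)]
      exact Units.val_pow_eq_pow_val t 2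
    · show _ * k = _ * k
      rw [hz2, mul_zero, mul_zero]
    · congr 1
      show ((t^((-1):ℤ) * (t^((-1):ℤ))⁻¹ : Lˣ) : L) = (t : L) ^ (0 : ℕ)
      rw [show (t^((-1):ℤ) * (t^((-1):ℤ))⁻¹ : Lˣ) = t ^ (0 : ℕ) by group <;> (try exact (pow_two t).symm)]
      exact Units.val_pow_eq_pow_val t 0
    · congr 1
      show (((t^((-1):ℤ))⁻¹ * (t^((-1):ℤ))⁻¹ : Lˣ) : L) = (t : L) ^ (2 : ℕ)
      rw [show ((t^((-1):ℤ))⁻¹ * (t^((-1):ℤ))⁻¹ : Lˣ) = t ^ (2 : ℕ) by group <;> (try exact (pow_two t).symm)]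
      exact Units.val_pow_eq_pow_val t 2
  · refine not_stable6_master _ (fun t : Lˣ => t^((-2):ℤ)) (fun t : Lˣ => t^((1):ℤ)) (fun t : Lˣ => t^((0):ℤ)) (fun t : Lˣ => t^((1):ℤ))
      ![0,4,0,0,0,4,0,2,0,0] (inj4 (fun t : Lˣ => t^((-2):ℤ)) (fun t : Lˣ => t^((1):ℤ)) (fun t : Lˣ => t^((0):ℤ)) (1) (Or.inl rfl)) ?_
    intro t i
    fin_cases i
    · congr 1
      show ((t^((-2):ℤ) * (t^((1):ℤ))^2 * (t^((0):ℤ))⁻¹ : Lˣ) : L) = (t : L) ^ (0 : ℕ)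
      rw [show (t^((-2):ℤ) * (t^((1):ℤ))^2 * (t^((0):ℤ))⁻¹ : Lˣ) = t ^ (0 : ℕ) by group <;> (try exact (pow_two t).symm)]
      exact Units.val_pow_eq_pow_val t 0
    · congr 1
      show (((t^((-2):ℤ))⁻¹ * (t^((1):ℤ))^2 * (t^((0):ℤ))⁻¹ : Lˣ) : L) = (t : L) ^ (4 : ℕ)
      rw [show ((t^((-2):ℤ))⁻¹ * (t^((1):ℤ))^2 * (t^((0):ℤ))⁻¹ : Lˣ) = t ^ (4 : ℕ) by group <;> (try exact (pow_two t).symm)]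
      exact Units.val_pow_eq_pow_val t 4
    · show _ * d = _ * d
      rw [hz0, mul_zero, mul_zero]
    · congr 1
      show (((t^((-2):ℤ))⁻¹ * ((t^((1):ℤ))⁻¹)^2 * (t^((0):ℤ))⁻¹ : Lˣ) : L) = (t : L) ^ (0 : ℕ)
      rw [show ((t^((-2):ℤ))⁻¹ * ((t^((1):ℤ))⁻¹)^2 * (t^((0):ℤ))⁻¹ : Lˣ) = t ^ (0 : ℕ) by group <;> (try exact (pow_two t).symm)]
      exact Units.val_pow_eq_pow_val t 0
    · congr 1
      show ((t^((-2):ℤ) * (t^((0):ℤ))^3 * (t^((1):ℤ))^2 : Lˣ) : L) = (t : L) ^ (0 : ℕ)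
      rw [show (t^((-2):ℤ) * (t^((0):ℤ))^3 * (t^((1):ℤ))^2 : Lˣ) = t ^ (0 : ℕ) by group <;> (try exact (pow_two t).symm)]
      exact Units.val_pow_eq_pow_val t 0
    · congr 1
      show (((t^((-2):ℤ))⁻¹ * (t^((0):ℤ))^3 * (t^((1):ℤ))^2 : Lˣ) : L) = (t : L) ^ (4 : ℕ)
      rw [show ((t^((-2):ℤ))⁻¹ * (t^((0):ℤ))^3 * (t^((1):ℤ))^2 : Lˣ) = t ^ (4 : ℕ) by group <;> (try exact (pow_two t).symm)]
      exact Units.val_pow_eq_pow_val t 4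
    · show _ * j = _ * j
      rw [hz1, mul_zero, mul_zero]
    · congr 1
      show (((t^((-2):ℤ))⁻¹ * (t^((0):ℤ))⁻¹ : Lˣ) : L) = (t : L) ^ (2 : ℕ)
      rw [show ((t^((-2):ℤ))⁻¹ * (t^((0):ℤ))⁻¹ : Lˣ) = t ^ (2 : ℕ) by group <;> (try exact (pow_two t).symm)]
      exact Units.val_pow_eq_pow_val t 2
    · congr 1
      show ((t^((1):ℤ) * (t^((1):ℤ))⁻¹ : Lˣ) : L) = (t : L) ^ (0 : ℕ)
      rw [show (t^((1):ℤ) * (t^((1):ℤ))⁻¹ : Lˣ) = t ^ (0 : ℕ) by group <;> (try exact (pow_two t).symm)]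
      exact Units.val_pow_eq_pow_val t 0
    · show _ * r = _ * r
      rw [hz2, mul_zero, mul_zero]
  · refine not_stable6_master _ (fun t : Lˣ => t^((-1):ℤ)) (fun t : Lˣ => t^((-1):ℤ)) (fun t : Lˣ => t^((1):ℤ)) (fun t : Lˣ => t^((-1):ℤ))
      ![0,0,0,2,0,0,0,0,0,2] (inj4 (fun t : Lˣ => t^((-1):ℤ)) (fun t : Lˣ => t^((-1):ℤ)) (fun t : Lˣ => t^((1):ℤ)) (-1) (Or.inr rfl)) ?_
    intro t i
    fin_cases i
    · show _ * a = _ * a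
      rw [hz0, mul_zero, mul_zero]
    · show _ * b = _ * b
      rw [hz1, mul_zero, mul_zero]
    · congr 1
      show ((t^((-1):ℤ) * ((t^((-1):ℤ))⁻¹)^2 * (t^((1):ℤ))⁻¹ : Lˣ) : L) = (t : L) ^ (0 : ℕ)
      rw [show (t^((-1):ℤ) * ((t^((-1):ℤ))⁻¹)^2 * (t^((1):ℤ))⁻¹ : Lˣ) = t ^ (0 : ℕ) by group <;> (try exact (pow_two t).symm)]
      exact Units.val_pow_eq_pow_val t 0
    · congr 1
      show (((t^((-1):ℤ))⁻¹ * ((t^((-1):ℤ))⁻¹)^2 * (t^((1):ℤ))⁻¹ : Lˣ) : L) = (t : L) ^ (2 : ℕ)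
      rw [show ((t^((-1):ℤ))⁻¹ * ((t^((-1):ℤ))⁻¹)^2 * (t^((1):ℤ))⁻¹ : Lˣ) = t ^ (2 : ℕ) by group <;> (try exact (pow_two t).symm)]
      exact Units.val_pow_eq_pow_val t 2
    · congr 1
      show ((t^((-1):ℤ) * (t^((1):ℤ))^3 * (t^((-1):ℤ))^2 : Lˣ) : L) = (t : L) ^ (0 : ℕ)
      rw [show (t^((-1):ℤ) * (t^((1):ℤ))^3 * (t^((-1):ℤ))^2 : Lˣ) = t ^ (0 : ℕ) by group <;> (try exact (pow_two t).symm)]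
      exact Units.val_pow_eq_pow_val t 0
    · show _ * h = _ * h
      rw [hz3, mul_zero, mul_zero]
    · show _ * j = _ * j
      rw [hz2, mul_zero, mul_zero]
    · congr 1
      show (((t^((-1):ℤ))⁻¹ * (t^((1):ℤ))⁻¹ : Lˣ) : L) = (t : L) ^ (0 : ℕ)
      rw [show ((t^((-1):ℤ))⁻¹ * (t^((1):ℤ))⁻¹ : Lˣ) = t ^ (0 : ℕ) by group <;> (try exact (pow_two t).symm)]
      exact Units.val_pow_eq_pow_val t 0
    · congr 1
      show ((t^((-1):ℤ) * (t^((-1):ℤ))⁻¹ : Lˣ) : L) = (t : L) ^ (0 : ℕ)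
      rw [show (t^((-1):ℤ) * (t^((-1):ℤ))⁻¹ : Lˣ) = t ^ (0 : ℕ) by group <;> (try exact (pow_two t).symm)]
      exact Units.val_pow_eq_pow_val t 0
    · congr 1
      show (((t^((-1):ℤ))⁻¹ * (t^((-1):ℤ))⁻¹ : Lˣ) : L) = (t : L) ^ (2 : ℕ)
      rw [show ((t^((-1):ℤ))⁻¹ * (t^((-1):ℤ))⁻¹ : Lˣ) = t ^ (2 : ℕ) by group <;> (try exact (pow_two t).symm)]
      exact Units.val_pow_eq_pow_val t 2
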